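/- Let C be a small category with a Grothendieck topology J and let X = Sheaf J (Type u) be the associated Grothendieck topos. A presheaf F : Xᵒᵖ ⥤ Type u is a sheaf for the canonical topology on X if and only if F is representable. -/

import Mathlib

/-!
Write `a ∘ y : C ⥤ Sh(J)` for sheafified Yoneda, so that maps `a (y c) ⟶ Z` are sections of `Z`
over `c`. A sieve on a sheaf `X` that contains every section of `X` locally is a cover for the
canonical topology: a compatible family into `Z` glues section by section, because `Z` is a
`J`-sheaf. This makes `a ∘ y` cover-dense, cover-preserving, locally full and locally faithful for
the canonical topology on `Sh(J)`. By the comparison lemma a canonical sheaf `F` is then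
determined by its restriction `P = F ∘ (a ∘ y)ᵒᵖ`, which is a `J`-sheaf; since `Hom(-, P)` has
the same restriction, `F ≅ Hom(-, P)`.
-/

open CategoryTheory Opposite

universe u

namespace SheafTopos

variable {C : Type u} [SmallCategory C] (J : GrothendieckTopology C)

noncomputable abbrev sheafifiedYoneda : C ⥤ Sheaf J (Type u) :=
  yoneda ⋙ presheafToSheaf J (Type u)

noncomputable abbrev restrictedYoneda : Sheaf J (Type u) ⥤ Cᵒᵖ ⥤ Type u :=
  yoneda ⋙ (Functor.whiskeringLeft _ _ _).obj (sheafifiedYoneda J).op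

noncomputable def restrictedYonedaIso : restrictedYoneda J ≅ sheafToPresheaf J (Type u) :=
  Functor.isoWhiskerRight (sheafificationAdjunction J (Type u)).compYonedaIso.symm
      ((Functor.whiskeringLeft _ _ _).obj yoneda.op) ≪≫
    Functor.isoWhiskerLeft (sheafToPresheaf J (Type u)) curriedYonedaLemma' ≪≫
    Functor.rightUnitor _

lemma yonedaMap_sheafifiedYoneda (U : C) :
    yonedaMap (sheafifiedYoneda J) U =
      toSheafify J (yoneda.obj U) ≫ ((restrictedYonedaIso J).app _).inv := by
  rw [Iso.eq_comp_inv]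
  ext c α
  change yonedaEquiv ((sheafificationAdjunction J _).homEquiv _ _
    ((presheafToSheaf J _).map (yoneda.map α))) = _
  rw [Adjunction.homEquiv_unit]
  erw [(sheafificationAdjunction J (Type u)).unit_naturality (yoneda.map α)]
  rw [yonedaEquiv_comp, yonedaEquiv_yoneda_map]
  rfl

lemma isSheaf_restrictedYoneda_obj (Z : Sheaf J (Type u)) :
    Presieve.IsSheaf J ((restrictedYoneda J).obj Z) :=
  Presieve.isSheaf_iso J ((restrictedYonedaIso J).app Z).symm
    ((isSheaf_iff_isSheaf_of_type J Z.obj).1 Z.property)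

noncomputable def restrictedYonedaFullyFaithful : (restrictedYoneda J).FullyFaithful :=
  (fullyFaithfulSheafToPresheaf J (Type u)).ofIso (restrictedYonedaIso J).symm

variable {J} {X : Sheaf J (Type u)}

def IsLocallySurjective (R : Sieve X) : Prop :=
  ∀ (c : C) (x : (sheafifiedYoneda J).obj c ⟶ X), (R.pullback x).functorPullback _ ∈ J c

lemma IsLocallySurjective.pullback {R : Sieve X} (hR : IsLocallySurjective R)
    {Y : Sheaf J (Type u)} (f : Y ⟶ X) : IsLocallySurjective (R.pullback f) := by
  intro c x
  rw [← Sieve.pullback_comp]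
  exact hR c (x ≫ f)

lemma IsLocallySurjective.isSheafFor_yoneda {R : Sieve X} (hR : IsLocallySurjective R)
    (Z : Sheaf J (Type u)) : Presieve.IsSheafFor (yoneda.obj Z) (R : Presieve X) := by
  intro u hu
  let G := sheafifiedYoneda J
  have : ∀ c (x : G.obj c ⟶ X), ∃! s : G.obj c ⟶ Z,
      ∀ c' (g : c' ⟶ c) (hg : R (G.map g ≫ x)), G.map g ≫ s = u _ hg := fun c x =>
    isSheaf_restrictedYoneda_obj J Z _ (hR c x) ((u.pullback x).functorPullback G)
      ((hu.pullback x).functorPullback G)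
  choose glue map_comp_glue eq_glue using this
  have glue_natural : ∀ {c c' : C} (g : c' ⟶ c) (x : G.obj c ⟶ X),
      glue c' (G.map g ≫ x) = G.map g ≫ glue c x := by
    intro c c' g x
    refine (eq_glue _ _ _ fun c'' g' hg' => ?_).symm
    rw [← Category.assoc, ← G.map_comp, map_comp_glue c x _ (g' ≫ g) (by simpa using hg')]
    congr 1
    simp
  let Φ := restrictedYonedaFullyFaithful J
  let T : (restrictedYoneda J).obj X ⟶ (restrictedYoneda J).obj Z :=
    { app c := TypeCat.ofHom (glue c.unop)
      naturality c c' g := by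
        ext x
        exact glue_natural g.unop x }
  obtain ⟨t, ht⟩ := Φ.map_surjective T
  have comp_t : ∀ c (x : G.obj c ⟶ X), x ≫ t = glue c x := fun c x =>
    ConcreteCategory.congr_hom (NatTrans.congr_app ht (op c)) x
  refine ⟨t, fun W f hf => Φ.map_injective ?_, fun t' ht' => Φ.map_injective ?_⟩
  · ext c y
    change y ≫ f ≫ t = y ≫ u f hf
    rw [← Category.assoc, comp_t]
    refine (eq_glue _ _ _ fun c' g hg => ?_).symm
    rw [← Category.assoc]
    exact (hu.to_sieveCompatible f (G.map g ≫ y) hf).symm.trans (by congr 1)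
  · ext c x
    change x ≫ t' = x ≫ t
    rw [comp_t]
    exact eq_glue _ _ _ fun c' g hg => by rw [← Category.assoc]; exact ht' _ hg

lemma IsLocallySurjective.mem_canonicalTopology {R : Sieve X} (hR : IsLocallySurjective R) :
    R ∈ Sheaf.canonicalTopology (Sheaf J (Type u)) X :=
  Sheaf.mem_finestTopology_of_forall_isSheafFor fun _ ⟨Z, hZ⟩ _ f =>
    hZ ▸ (hR.pullback f).isSheafFor_yoneda Z

variable (J)

instance (U : C) : Presheaf.IsLocallySurjective J (yonedaMap (sheafifiedYoneda J) U) := by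
  rw [yonedaMap_sheafifiedYoneda]
  infer_instance

instance (U : C) : Presheaf.IsLocallyInjective J (yonedaMap (sheafifiedYoneda J) U) := by
  rw [yonedaMap_sheafifiedYoneda]
  infer_instance

lemma imageSieve_sheafifiedYoneda_mem {c U : C}
    (x : (sheafifiedYoneda J).obj c ⟶ (sheafifiedYoneda J).obj U) :
    (sheafifiedYoneda J).imageSieve x ∈ J c :=
  Presheaf.imageSieve_mem J (yonedaMap (sheafifiedYoneda J) U) x

lemma coverPreserving_sheafifiedYoneda :
    CoverPreserving J (Sheaf.canonicalTopology (Sheaf J (Type u))) (sheafifiedYoneda J) where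
  cover_preserve {U S} hS := by
    refine IsLocallySurjective.mem_canonicalTopology fun c x => ?_
    refine J.transitive (imageSieve_sheafifiedYoneda_mem J x) _ fun c' h ⟨α, hα⟩ => ?_
    refine J.superset_covering (fun c'' g hg => ?_) (J.pullback_stable α hS)
    change S.functorPushforward _ ((sheafifiedYoneda J).map (g ≫ h) ≫ x)
    rw [Functor.map_comp, Category.assoc, ← hα, ← Functor.map_comp]
    exact Sieve.image_mem_functorPushforward _ S hg

instance : (sheafifiedYoneda J).IsCoverDense (Sheaf.canonicalTopology (Sheaf J (Type u))) where
  is_cover _ := IsLocallySurjective.mem_canonicalTopology fun c _ =>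
    J.superset_covering (fun _ _ _ => Presieve.in_coverByImage _ _) (J.top_mem c)

instance : (sheafifiedYoneda J).IsLocallyFull (Sheaf.canonicalTopology (Sheaf J (Type u))) where
  functorPushforward_imageSieve_mem x :=
    (coverPreserving_sheafifiedYoneda J).cover_preserve (imageSieve_sheafifiedYoneda_mem J x)

instance : (sheafifiedYoneda J).IsLocallyFaithful (Sheaf.canonicalTopology (Sheaf J (Type u))) where
  functorPushforward_equalizer_mem α β h :=
    (coverPreserving_sheafifiedYoneda J).cover_preserve
      (Presheaf.equalizerSieve_mem J (yonedaMap (sheafifiedYoneda J) _) α β h)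

end SheafTopos

open SheafTopos in
theorem statement9 {C : Type u} [SmallCategory C] (J : GrothendieckTopology C)
    (F : (Sheaf J (Type u))ᵒᵖ ⥤ Type u) :
    Presieve.IsSheaf (Sheaf.canonicalTopology (Sheaf J (Type u))) F ↔
      F.IsRepresentable := by
  refine ⟨fun hF => ?_, fun _ => Sheaf.isSheaf_of_isRepresentable F⟩
  let K := Sheaf.canonicalTopology (Sheaf J (Type u))
  have := Functor.IsCoverDense.isContinuous J K _ (coverPreserving_sheafifiedYoneda J)
  let F' : Sheaf K (Type u) := ⟨F, (isSheaf_iff_isSheaf_of_type K F).2 hF⟩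
  let P : Sheaf J (Type u) := ⟨_, (sheafifiedYoneda J).op_comp_isSheaf J K F'⟩
  let yP : Sheaf K (Type u) :=
    ⟨yoneda.obj P, (isSheaf_iff_isSheaf_of_type K _).2 (Sheaf.isSheaf_yoneda_obj P)⟩
  exact Functor.IsRepresentable.mk'
    (Functor.IsCoverDense.Types.presheafIso (ℱ := yP) (ℱ' := F') ((restrictedYonedaIso J).app P))
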